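/- Proposition 3 (naive firm never advertises more than the aware firm under variable capacity): Fix a horizon N and initial reputation R_1 ∈ [0,1]. Let A^n be the naive (myopic) advertisement sequence defined recursively along the full-fill trajectory by: A^n_i = H if (p−c)·D(f(R^n_i, H)) − c_A·H > (p−c)·D(f(R^n_i, L)) − c_A·L, and A^n_i = L otherwise, where R^n_1 = R_1 and R^n evolves by the full-fill dynamics under A^n. Then there exists an advertisement sequence A* ∈ {L,H}^N maximizing the full-fill total profit Π(·, R_1) such that the number of periods i with A*_i = H is at least the number of periods i with A^n_i = H. -/

import Mathlib

/-!
Reputation never decreases, and the naive firm advertises high exactly on the set of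
reputations where high advertising is myopically better. That set is an interval: where
demand after low advertising vanishes, the demand gap between the two levels grows with
reputation, and where it is positive, the concavity of demand makes the gap shrink. So the naive
trajectory crosses the interval once, and starting ahead by at most one high advertisement
saves the naive firm at most one high advertisement later on.

The aware firm is obtained by backward induction with ties broken towards `H`; its value
function is monotone in reputation. Where the naive firm advertises high, so does the aware
firm. Where only the aware firm does, it moves ahead of the naive firm by one high
advertisement, which by the above the naive firm can make up for at most once.
-/

noncomputable section

/-- Post-advertisement reputation map. -/
def frep (α R a : ℝ) : ℝ := R + (1 - R) * a ^ α

/-- Demand function. -/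
def dem (Λ q x : ℝ) : ℝ := if 0 < x then max 0 (Λ * (1 - q / x)) else 0

/-- Full-fill reputation trajectory (0-indexed periods). -/
def rep (α w Λ q : ℝ) (A : ℕ → ℝ) (R1 : ℝ) : ℕ → ℝ
  | 0 => R1
  | i + 1 =>
      let R' := frep α (rep α w Λ q A R1 i) (A i)
      if 0 < dem Λ q R' then (1 - w) * R' + w else R'

/-- Full-fill total profit over horizon `N`. -/
def profit (α w Λ q p c cA : ℝ) (A : ℕ → ℝ) (R1 : ℝ) (N : ℕ) : ℝ :=
  ∑ i ∈ Finset.range N,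
    ((p - c) * dem Λ q (frep α (rep α w Λ q A R1 i) (A i)) - cA * A i)


/-- The naive (myopic) firm's advertisement decision at reputation `R`:
high level iff it yields strictly larger single-period profit. -/
def naiveAd (α Λ q p c cA L H : ℝ) (R : ℝ) : ℝ :=
  if (p - c) * dem Λ q (frep α R L) - cA * L <
      (p - c) * dem Λ q (frep α R H) - cA * H then H else L

/-- The naive firm's reputation trajectory under full-fill dynamics. -/
def naiveRep (α w Λ q p c cA L H R1 : ℝ) : ℕ → ℝ
  | 0 => R1
  | i + 1 =>
      let R := naiveRep α w Λ q p c cA L H R1 i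
      let R' := frep α R (naiveAd α Λ q p c cA L H R)
      if 0 < dem Λ q R' then (1 - w) * R' + w else R'

namespace TwoAction

variable {σ β : Type*} (T : β → σ → σ) (r : β → σ → ℝ) (L H : β)

def trajectory (A : ℕ → β) (x : σ) : ℕ → σ
  | 0 => x
  | i + 1 => T (A i) (trajectory A x i)

def totalReward (A : ℕ → β) (x : σ) (N : ℕ) : ℝ :=
  ∑ i ∈ Finset.range N, r (A i) (trajectory T A x i)

def optValue : ℕ → σ → ℝ
  | 0, _ => 0
  | N + 1, x => max (r L x + optValue N (T L x)) (r H x + optValue N (T H x))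

def prepend (a : β) (s : ℕ → β) : ℕ → β
  | 0 => a
  | i + 1 => s i

/-- Ties are broken towards `H`, as the comparison with the naive firm requires. -/
def optSeq : ℕ → σ → ℕ → β
  | 0, _ => fun _ => L
  | N + 1, x =>
      if r L x + optValue T r L H N (T L x) ≤ r H x + optValue T r L H N (T H x) then
        prepend H (optSeq N (T H x))
      else prepend L (optSeq N (T L x))

def naiveAction (x : σ) : β := if r L x < r H x then H else L

def naiveStep (x : σ) : σ := T (naiveAction r L H x) x

def naiveCount (N : ℕ) (x : σ) : ℕ :=
  Nat.count (fun i => r L ((naiveStep T r L H)^[i] x) < r H ((naiveStep T r L H)^[i] x)) N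

theorem naiveAction_mem (x : σ) : naiveAction r L H x = L ∨ naiveAction r L H x = H := by
  unfold naiveAction; split_ifs
  exacts [Or.inr rfl, Or.inl rfl]

variable {T r L H}

section Optimality

theorem trajectory_succ' (A : ℕ → β) (x : σ) (i : ℕ) :
    trajectory T A x (i + 1) = trajectory T (fun j => A (j + 1)) (T (A 0) x) i := by
  induction i with
  | zero => rfl
  | succ i ih => rw [trajectory, ih]; rfl

theorem totalReward_succ (A : ℕ → β) (x : σ) (N : ℕ) :
    totalReward T r A x (N + 1) =
      r (A 0) x + totalReward T r (fun j => A (j + 1)) (T (A 0) x) N := by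
  simp only [totalReward, Finset.sum_range_succ', trajectory_succ']
  exact add_comm _ _

theorem totalReward_le_optValue {A : ℕ → β} (hA : ∀ i, A i = L ∨ A i = H) (N : ℕ) (x : σ) :
    totalReward T r A x N ≤ optValue T r L H N x := by
  induction N generalizing A x with
  | zero => simp [totalReward, optValue]
  | succ N ih =>
    have htail := ih (fun i => hA (i + 1)) (T (A 0) x)
    rw [totalReward_succ, optValue]
    rcases hA 0 with h | h <;> rw [h] at htail ⊢
    · exact le_max_of_le_left (add_le_add_right htail _)
    · exact le_max_of_le_right (add_le_add_right htail _)

theorem optSeq_succ_of_le {N : ℕ} {x : σ}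
    (h : r L x + optValue T r L H N (T L x) ≤ r H x + optValue T r L H N (T H x)) :
    optSeq T r L H (N + 1) x = prepend H (optSeq T r L H N (T H x)) := by
  rw [optSeq, if_pos h]

theorem optSeq_succ_of_lt {N : ℕ} {x : σ}
    (h : r H x + optValue T r L H N (T H x) < r L x + optValue T r L H N (T L x)) :
    optSeq T r L H (N + 1) x = prepend L (optSeq T r L H N (T L x)) := by
  rw [optSeq, if_neg h.not_ge]

theorem optSeq_mem (N : ℕ) (x : σ) (i : ℕ) :
    optSeq T r L H N x i = L ∨ optSeq T r L H N x i = H := by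
  induction N generalizing x i with
  | zero => exact Or.inl rfl
  | succ N ih =>
    rcases le_or_gt (r L x + optValue T r L H N (T L x)) (r H x + optValue T r L H N (T H x))
      with h | h
    · rw [optSeq_succ_of_le h]
      cases i
      exacts [Or.inr rfl, ih _ _]
    · rw [optSeq_succ_of_lt h]
      cases i
      exacts [Or.inl rfl, ih _ _]

theorem totalReward_optSeq (N : ℕ) (x : σ) :
    totalReward T r (optSeq T r L H N x) x N = optValue T r L H N x := by
  induction N generalizing x with
  | zero => simp [totalReward, optValue]
  | succ N ih =>
    rcases le_or_gt (r L x + optValue T r L H N (T L x)) (r H x + optValue T r L H N (T H x))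
      with h | h
    · rw [optSeq_succ_of_le h, totalReward_succ, optValue, max_eq_right h]
      exact congrArg _ (ih _)
    · rw [optSeq_succ_of_lt h, totalReward_succ, optValue, max_eq_left h.le]
      exact congrArg _ (ih _)

theorem optValue_monotone [Preorder σ] (hTL : Monotone (T L)) (hTH : Monotone (T H))
    (hrL : Monotone (r L)) (hrH : Monotone (r H)) (N : ℕ) : Monotone (optValue T r L H N) := by
  induction N with
  | zero => exact monotone_const
  | succ N ih =>
    exact fun x y hxy => max_le_max (add_le_add (hrL hxy) (ih (hTL hxy)))
      (add_le_add (hrH hxy) (ih (hTH hxy)))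

end Optimality

theorem naiveAction_eq_right_iff (hLH : L ≠ H) {x : σ} :
    naiveAction r L H x = H ↔ r L x < r H x := by
  unfold naiveAction; split_ifs with h
  exacts [iff_of_true rfl h, iff_of_false hLH h]

theorem naiveCount_succ (N : ℕ) (x : σ) :
    naiveCount T r L H (N + 1) x =
      naiveCount T r L H N (naiveStep T r L H x) + if r L x < r H x then 1 else 0 := by
  simp only [naiveCount, Nat.count_succ', Function.iterate_succ_apply, Function.iterate_zero_apply]
  rfl

theorem naiveCount_succ_of_lt {N : ℕ} {x : σ} (h : r L x < r H x) :
    naiveCount T r L H (N + 1) x = naiveCount T r L H N (T H x) + 1 := by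
  rw [naiveCount_succ, if_pos h, naiveStep, naiveAction, if_pos h]

theorem naiveCount_succ_of_not_lt {N : ℕ} {x : σ} (h : ¬r L x < r H x) :
    naiveCount T r L H (N + 1) x = naiveCount T r L H N (T L x) := by
  rw [naiveCount_succ, if_neg h, naiveStep, naiveAction, if_neg h, add_zero]

theorem count_prepend_eq [DecidableEq β] (a b : β) (s : ℕ → β) (N : ℕ) :
    Nat.count (fun i => prepend a s i = b) (N + 1) =
      Nat.count (fun i => s i = b) N + if a = b then 1 else 0 :=
  Nat.count_succ' _ N

section Preorder

variable [Preorder σ] {N : ℕ} {u v x : σ}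

theorem le_naiveStep (hL : id ≤ T L) (hLH : T L ≤ T H) (x : σ) : x ≤ naiveStep T r L H x := by
  unfold naiveStep naiveAction
  split_ifs
  exacts [(hL x).trans (hLH x), hL x]

theorem naiveCount_eq_zero_of_forall_ge (hL : id ≤ T L) (hLH : T L ≤ T H)
    (h : ∀ y, x ≤ y → ¬r L y < r H y) : naiveCount T r L H N x = 0 :=
  Nat.count_of_forall_not fun i _ =>
    h _ (Function.id_le_iterate_of_id_le (le_naiveStep hL hLH) i x)

theorem naiveCount_eq_zero_of_exit (hL : id ≤ T L) (hLH : T L ≤ T H)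
    (hI : {x | r L x < r H x}.OrdConnected) (hu : r L u < r H u) (huv : u ≤ v)
    (hv : ¬r L v < r H v) (hvx : v ≤ x) : naiveCount T r L H N x = 0 :=
  naiveCount_eq_zero_of_forall_ge hL hLH fun _ hxy hy =>
    hv (hI.out hu hy ⟨huv, hvx.trans hxy⟩)

theorem naiveCount_antitoneOn (hTH : Monotone (T H)) (hL : id ≤ T L) (hLH : T L ≤ T H)
    (hI : {x | r L x < r H x}.OrdConnected) (N : ℕ) :
    AntitoneOn (naiveCount T r L H N) {x | r L x < r H x} := by
  induction N with
  | zero => exact fun _ _ _ _ _ => le_rfl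
  | succ N ih =>
    intro x hx y hy hxy
    rw [naiveCount_succ_of_lt hx, naiveCount_succ_of_lt hy]
    by_cases hy' : r L (T H y) < r H (T H y)
    · have hx' : r L (T H x) < r H (T H x) := hI.out hx hy' ⟨(hL x).trans (hLH x), hTH hxy⟩
      exact Nat.add_le_add_right (ih hx' hy' (hTH hxy)) 1
    · rw [naiveCount_eq_zero_of_exit hL hLH hI hy ((hL y).trans (hLH y)) hy' le_rfl]
      omega

end Preorder

section LinearOrder

variable [LinearOrder σ] {N : ℕ} {x y : σ}

theorem naiveCount_le_naiveCount_add_one (hTL : Monotone (T L)) (hTH : Monotone (T H))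
    (hL : id ≤ T L) (hLH : T L ≤ T H) (hI : {x | r L x < r H x}.OrdConnected)
    (hxy : x ≤ y) (hyx : y ≤ T H x) : naiveCount T r L H N x ≤ naiveCount T r L H N y + 1 := by
  induction N generalizing x y with
  | zero => exact Nat.zero_le _
  | succ N ih =>
    by_cases hx : r L x < r H x
    · rw [naiveCount_succ_of_lt hx]
      by_cases hy : r L y < r H y
      · rw [naiveCount_succ_of_lt hy]
        exact Nat.add_le_add_right (ih (hTH hxy) (hTH hyx)) 1
      · rw [naiveCount_eq_zero_of_exit hL hLH hI hx hxy hy hyx]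
        omega
    · rw [naiveCount_succ_of_not_lt hx]
      have hy_succ : naiveCount T r L H N y ≤ naiveCount T r L H (N + 1) y :=
        Nat.count_monotone _ N.le_succ
      rcases le_or_gt (T L x) y with hxy' | hyx'
      · exact (ih hxy' (hyx.trans (hTH (hL x)))).trans (by omega)
      · by_cases hy : r L y < r H y
        · by_cases hx' : r L (T L x) < r H (T L x)
          · exact (naiveCount_antitoneOn hTH hL hLH hI N hy hx' hyx'.le).trans (by omega)
          · rw [naiveCount_eq_zero_of_exit hL hLH hI hy hyx'.le hx' le_rfl]
            exact Nat.zero_le _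
        · rw [naiveCount_succ_of_not_lt hy]
          exact ih (hTL hxy) ((hTL hyx'.le).trans (hLH _))

theorem naiveCount_le_count_optSeq [DecidableEq β] (hTL : Monotone (T L)) (hTH : Monotone (T H))
    (hrL : Monotone (r L)) (hrH : Monotone (r H)) (hL : id ≤ T L) (hLH : T L ≤ T H)
    (hI : {x | r L x < r H x}.OrdConnected) (N : ℕ) (x : σ) :
    naiveCount T r L H N x ≤ Nat.count (fun i => optSeq T r L H N x i = H) N := by
  induction N generalizing x with
  | zero => exact le_rfl
  | succ N ih =>
    by_cases hx : r L x < r H x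
    · have hH : r L x + optValue T r L H N (T L x) ≤ r H x + optValue T r L H N (T H x) :=
        add_le_add hx.le (optValue_monotone hTL hTH hrL hrH N (hLH x))
      rw [naiveCount_succ_of_lt hx, optSeq_succ_of_le hH, count_prepend_eq, if_pos rfl]
      exact Nat.add_le_add_right (ih _) 1
    · rw [naiveCount_succ_of_not_lt hx]
      rcases le_or_gt (r L x + optValue T r L H N (T L x))
        (r H x + optValue T r L H N (T H x)) with h | h
      · rw [optSeq_succ_of_le h, count_prepend_eq, if_pos rfl]
        exact (naiveCount_le_naiveCount_add_one hTL hTH hL hLH hI (hLH x) (hTH (hL x))).trans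
          (Nat.add_le_add_right (ih _) 1)
      · rw [optSeq_succ_of_lt h, count_prepend_eq]
        exact (ih _).trans (Nat.le_add_right _ _)

end LinearOrder

end TwoAction

open TwoAction

section Model

variable {α w Λ q : ℝ}

theorem frep_mono_left {a R R' : ℝ} (ha : a ^ α ≤ 1) (h : R ≤ R') : frep α R a ≤ frep α R' a := by
  unfold frep; nlinarith

theorem frep_mono_right {a b R : ℝ} (hR : R ≤ 1) (h : a ^ α ≤ b ^ α) : frep α R a ≤ frep α R b := by
  unfold frep; nlinarith

theorem le_frep {a R : ℝ} (ha : 0 ≤ a ^ α) (hR : R ≤ 1) : R ≤ frep α R a := by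
  unfold frep; nlinarith

theorem frep_le_one {a R : ℝ} (ha : a ^ α ≤ 1) (hR : R ≤ 1) : frep α R a ≤ 1 := by
  unfold frep; nlinarith

theorem dem_nonneg (x : ℝ) : 0 ≤ dem Λ q x := by
  unfold dem; split_ifs
  exacts [le_max_left _ _, le_rfl]

theorem dem_of_lt (hΛ : 0 ≤ Λ) (hq : 0 ≤ q) {x : ℝ} (h : q < x) :
    dem Λ q x = Λ * (1 - q / x) := by
  have hx : 0 < x := hq.trans_lt h
  rw [dem, if_pos hx, max_eq_right (mul_nonneg hΛ (sub_nonneg.2 ((div_le_one hx).2 h.le)))]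

theorem dem_eq_zero_of_le (hΛ : 0 ≤ Λ) {x : ℝ} (h : x ≤ q) : dem Λ q x = 0 := by
  unfold dem
  split_ifs with hx
  · exact max_eq_left (mul_nonpos_of_nonneg_of_nonpos hΛ
      (sub_nonpos.2 ((le_div_iff₀ hx).2 (by linarith))))
  · rfl

theorem dem_monotone (hΛ : 0 ≤ Λ) (hq : 0 ≤ q) : Monotone (dem Λ q) := by
  intro x y hxy
  by_cases hx : 0 < x
  · rw [dem, dem, if_pos hx, if_pos (hx.trans_le hxy)]
    gcongr
  · rw [dem, if_neg hx]
    exact dem_nonneg y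

/-- Concavity of `x ↦ Λ (1 - q / x)` above `q`. -/
theorem dem_sub_dem_le (hΛ : 0 ≤ Λ) (hq : 0 ≤ q) {u v u' v' : ℝ} (hu : q < u) (huu' : u ≤ u')
    (hvv' : v ≤ v') (hd : 0 ≤ v' - u') (hdd : v' - u' ≤ v - u) :
    dem Λ q v' - dem Λ q u' ≤ dem Λ q v - dem Λ q u := by
  have hu0 : 0 < u := hq.trans_lt hu
  have hv0 : 0 < v := by linarith
  have hu'0 : 0 < u' := by linarith
  have hv'0 : 0 < v' := by linarith
  have hgap : ∀ s t : ℝ, 0 < s → 0 < t →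
      Λ * (1 - q / t) - Λ * (1 - q / s) = Λ * q * ((t - s) / (s * t)) := fun s t hs ht => by
    field_simp; ring
  rw [dem_of_lt hΛ hq hu, dem_of_lt hΛ hq (hu.trans_le huu'), dem_of_lt hΛ hq (by linarith : q < v),
    dem_of_lt hΛ hq (by linarith : q < v'), hgap u' v' hu'0 hv'0, hgap u v hu0 hv0]
  exact mul_le_mul_of_nonneg_left (div_le_div₀ (hd.trans hdd) hdd (mul_pos hu0 hv0)
    (mul_le_mul huu' hvv' hv0.le hu'0.le)) (mul_nonneg hΛ hq)

def fillUpdate (w Λ q z : ℝ) : ℝ := if 0 < dem Λ q z then (1 - w) * z + w else z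

theorem le_fillUpdate (hw0 : 0 ≤ w) {z : ℝ} (hz : z ≤ 1) : z ≤ fillUpdate w Λ q z := by
  unfold fillUpdate; split_ifs <;> nlinarith

theorem fillUpdate_le_one (hw1 : w ≤ 1) {z : ℝ} (hz : z ≤ 1) : fillUpdate w Λ q z ≤ 1 := by
  unfold fillUpdate; split_ifs <;> nlinarith

theorem fillUpdate_mono (hΛ : 0 ≤ Λ) (hq : 0 ≤ q) (hw0 : 0 ≤ w) (hw1 : w ≤ 1) {z z' : ℝ}
    (hz' : z' ≤ 1) (h : z ≤ z') : fillUpdate w Λ q z ≤ fillUpdate w Λ q z' := by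
  have hpos : 0 < dem Λ q z → 0 < dem Λ q z' := fun hz => hz.trans_le (dem_monotone hΛ hq h)
  unfold fillUpdate
  split_ifs with h₁ h₂ h₂
  · nlinarith
  · exact absurd (hpos h₁) h₂
  · nlinarith
  · exact h

theorem demGap_le_or_le (hΛ : 0 ≤ Λ) (hq : 0 ≤ q) {a b X Y Z : ℝ} (hab : a ^ α ≤ b ^ α)
    (hb1 : b ^ α ≤ 1) (hXY : X ≤ Y) (hYZ : Y ≤ Z) (hZ1 : Z ≤ 1) :
    dem Λ q (frep α X b) - dem Λ q (frep α X a) ≤ dem Λ q (frep α Y b) - dem Λ q (frep α Y a) ∨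
      dem Λ q (frep α Z b) - dem Λ q (frep α Z a) ≤
        dem Λ q (frep α Y b) - dem Λ q (frep α Y a) := by
  rcases le_or_gt (frep α Y a) q with hY | hY
  · left
    have hb : dem Λ q (frep α X b) ≤ dem Λ q (frep α Y b) :=
      dem_monotone hΛ hq (frep_mono_left hb1 hXY)
    linarith [dem_eq_zero_of_le hΛ hY, dem_nonneg (Λ := Λ) (q := q) (frep α X a)]
  · right
    refine dem_sub_dem_le hΛ hq hY (frep_mono_left (hab.trans hb1) hYZ) (frep_mono_left hb1 hYZ)
      ?_ ?_ <;> unfold frep <;> nlinarith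

def periodProfit (α Λ q p c cA a : ℝ) (x : unitInterval) : ℝ :=
  (p - c) * dem Λ q (frep α x a) - cA * a

theorem periodProfit_monotone (hΛ : 0 ≤ Λ) (hq : 0 ≤ q) {p c cA a : ℝ} (hpc : c ≤ p)
    (ha : a ^ α ≤ 1) : Monotone (periodProfit α Λ q p c cA a) := fun _ _ hxy =>
  sub_le_sub_right (mul_le_mul_of_nonneg_left (dem_monotone hΛ hq (frep_mono_left ha hxy))
    (sub_nonneg.2 hpc)) _

theorem ordConnected_periodProfit_lt (hΛ : 0 ≤ Λ) (hq : 0 ≤ q) {p c cA L H : ℝ} (hpc : c ≤ p)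
    (hLH : L ^ α ≤ H ^ α) (hH : H ^ α ≤ 1) :
    {x | periodProfit α Λ q p c cA L x < periodProfit α Λ q p c cA H x}.OrdConnected := by
  refine ⟨fun X hX Z hZ Y hY => ?_⟩
  simp only [Set.mem_ofPred_eq, periodProfit] at hX hZ ⊢
  have hpc' : 0 ≤ p - c := sub_nonneg.2 hpc
  rcases demGap_le_or_le hΛ hq hLH hH (hY.1 : (X : ℝ) ≤ Y) hY.2 Z.2.2 with h | h
  · nlinarith [mul_le_mul_of_nonneg_left h hpc']
  · nlinarith [mul_le_mul_of_nonneg_left h hpc']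

/-- The clamp to `[0, 1]` only makes the map total: see `coe_repStep`. -/
def repStep (α w Λ q a : ℝ) (x : unitInterval) : unitInterval :=
  Set.projIcc 0 1 zero_le_one (fillUpdate w Λ q (frep α x a))

theorem coe_repStep (hw0 : 0 ≤ w) (hw1 : w ≤ 1) {a : ℝ} (ha0 : 0 ≤ a ^ α) (ha1 : a ^ α ≤ 1)
    (x : unitInterval) : (repStep α w Λ q a x : ℝ) = fillUpdate w Λ q (frep α x a) := by
  have hle : (x : ℝ) ≤ fillUpdate w Λ q (frep α x a) :=
    (le_frep ha0 x.2.2).trans (le_fillUpdate hw0 (frep_le_one ha1 x.2.2))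
  rw [repStep,
    Set.projIcc_of_mem _ ⟨x.2.1.trans hle, fillUpdate_le_one hw1 (frep_le_one ha1 x.2.2)⟩]

theorem repStep_monotone (hΛ : 0 ≤ Λ) (hq : 0 ≤ q) (hw0 : 0 ≤ w) (hw1 : w ≤ 1) {a : ℝ}
    (ha : a ^ α ≤ 1) : Monotone (repStep α w Λ q a) := fun _ y hxy =>
  Set.monotone_projIcc _
    (fillUpdate_mono hΛ hq hw0 hw1 (frep_le_one ha y.2.2) (frep_mono_left ha hxy))

theorem repStep_le_repStep (hΛ : 0 ≤ Λ) (hq : 0 ≤ q) (hw0 : 0 ≤ w) (hw1 : w ≤ 1) {a b : ℝ}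
    (hab : a ^ α ≤ b ^ α) (hb : b ^ α ≤ 1) : repStep α w Λ q a ≤ repStep α w Λ q b := fun x =>
  Set.monotone_projIcc _
    (fillUpdate_mono hΛ hq hw0 hw1 (frep_le_one hb x.2.2) (frep_mono_right x.2.2 hab))

theorem id_le_repStep (hw0 : 0 ≤ w) (hw1 : w ≤ 1) {a : ℝ} (ha0 : 0 ≤ a ^ α) (ha1 : a ^ α ≤ 1) :
    id ≤ repStep α w Λ q a := fun x => by
  change (x : ℝ) ≤ repStep α w Λ q a x
  rw [coe_repStep hw0 hw1 ha0 ha1]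
  exact (le_frep ha0 x.2.2).trans (le_fillUpdate hw0 (frep_le_one ha1 x.2.2))

theorem rep_eq_trajectory (hw0 : 0 ≤ w) (hw1 : w ≤ 1) {A : ℕ → ℝ}
    (hA : ∀ i, 0 ≤ A i ^ α ∧ A i ^ α ≤ 1) (x : unitInterval) (i : ℕ) :
    rep α w Λ q A x i = trajectory (repStep α w Λ q) A x i := by
  induction i with
  | zero => rfl
  | succ i ih => rw [trajectory, coe_repStep hw0 hw1 (hA i).1 (hA i).2, ← ih]; rfl

theorem profit_eq_totalReward (hw0 : 0 ≤ w) (hw1 : w ≤ 1) {p c cA : ℝ} {A : ℕ → ℝ}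
    (hA : ∀ i, 0 ≤ A i ^ α ∧ A i ^ α ≤ 1) (x : unitInterval) (N : ℕ) :
    profit α w Λ q p c cA A x N =
      totalReward (repStep α w Λ q) (periodProfit α Λ q p c cA) A x N :=
  Finset.sum_congr rfl fun i _ => by rw [rep_eq_trajectory hw0 hw1 hA]; rfl

theorem naiveRep_eq_iterate (hw0 : 0 ≤ w) (hw1 : w ≤ 1) {p c cA L H : ℝ}
    (hL : 0 ≤ L ^ α ∧ L ^ α ≤ 1) (hH : 0 ≤ H ^ α ∧ H ^ α ≤ 1) (x : unitInterval) (i : ℕ) :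
    naiveRep α w Λ q p c cA L H x i =
      ((naiveStep (repStep α w Λ q) (periodProfit α Λ q p c cA) L H)^[i] x : ℝ) := by
  induction i with
  | zero => rfl
  | succ i ih =>
    rw [Function.iterate_succ_apply', naiveStep]
    set y := (naiveStep (repStep α w Λ q) (periodProfit α Λ q p c cA) L H)^[i] x
    have ha : 0 ≤ naiveAction (periodProfit α Λ q p c cA) L H y ^ α ∧
        naiveAction (periodProfit α Λ q p c cA) L H y ^ α ≤ 1 := by
      rcases naiveAction_mem (periodProfit α Λ q p c cA) L H y with h | h <;> rw [h]
      exacts [hL, hH]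
    change fillUpdate w Λ q (frep α (naiveRep α w Λ q p c cA L H x i)
      (naiveAd α Λ q p c cA L H (naiveRep α w Λ q p c cA L H x i))) = _
    rw [ih, coe_repStep hw0 hw1 ha.1 ha.2]
    rfl

theorem count_naiveAd_eq_naiveCount (hw0 : 0 ≤ w) (hw1 : w ≤ 1) {p c cA L H : ℝ} (hLH : L ≠ H)
    (hL : 0 ≤ L ^ α ∧ L ^ α ≤ 1) (hH : 0 ≤ H ^ α ∧ H ^ α ≤ 1) (x : unitInterval) (N : ℕ) :
    Nat.count (fun i => naiveAd α Λ q p c cA L H (naiveRep α w Λ q p c cA L H x i) = H) N =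
      naiveCount (repStep α w Λ q) (periodProfit α Λ q p c cA) L H N x := by
  unfold naiveCount
  congr 1
  ext i
  rw [naiveRep_eq_iterate hw0 hw1 hL hH]
  exact naiveAction_eq_right_iff (r := periodProfit α Λ q p c cA) hLH

end Model

theorem naive_never_more_high_ads_than_aware_general
    (Λ c p cA m u α w L H R1 q : ℝ) (N : ℕ)
    (hΛ : 0 < Λ) (hc : 0 < c) (hcp : c < p)
    (hm : 0 < m) (hu : 0 ≤ u) (hqdef : q = (u + p) / m)
    (hα : 0 < α) (hw0 : 0 ≤ w) (hw1 : w ≤ 1)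
    (hL0 : 0 ≤ L) (hLH : L < H) (hH1 : H ≤ 1)
    (hR10 : 0 ≤ R1) (hR11 : R1 ≤ 1) :
    ∃ Astar : ℕ → ℝ, (∀ i, Astar i = L ∨ Astar i = H) ∧
      (∀ B : ℕ → ℝ, (∀ i, B i = L ∨ B i = H) →
        profit α w Λ q p c cA B R1 N ≤ profit α w Λ q p c cA Astar R1 N) ∧
      ((Finset.range N).filter
          (fun i => naiveAd α Λ q p c cA L H (naiveRep α w Λ q p c cA L H R1 i) = H)).card ≤
        ((Finset.range N).filter (fun i => Astar i = H)).card := by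
  have hq : 0 ≤ q := hqdef ▸ div_nonneg (by linarith) hm.le
  have hLHα : L ^ α ≤ H ^ α := Real.rpow_le_rpow hL0 hLH.le hα.le
  have hHα : H ^ α ≤ 1 := Real.rpow_le_one (hL0.trans hLH.le) hH1 hα.le
  have hL : 0 ≤ L ^ α ∧ L ^ α ≤ 1 := ⟨Real.rpow_nonneg hL0 α, hLHα.trans hHα⟩
  have hH : 0 ≤ H ^ α ∧ H ^ α ≤ 1 := ⟨hL.1.trans hLHα, hHα⟩
  have hbounds : ∀ {A : ℕ → ℝ}, (∀ i, A i = L ∨ A i = H) → ∀ i, 0 ≤ A i ^ α ∧ A i ^ α ≤ 1 :=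
    fun hA i => (hA i).elim (fun h => h ▸ hL) (fun h => h ▸ hH)
  set x : unitInterval := ⟨R1, hR10, hR11⟩
  set T := repStep α w Λ q
  set r := periodProfit α Λ q p c cA
  refine ⟨optSeq T r L H N x, optSeq_mem N x, fun B hB => ?_, ?_⟩
  · calc profit α w Λ q p c cA B R1 N = totalReward T r B x N :=
          profit_eq_totalReward hw0 hw1 (hbounds hB) x N
      _ ≤ optValue T r L H N x := totalReward_le_optValue hB N x
      _ = totalReward T r (optSeq T r L H N x) x N := (totalReward_optSeq N x).symm
      _ = _ := (profit_eq_totalReward hw0 hw1 (hbounds (optSeq_mem N x)) x N).symm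
  · have hcount : naiveCount T r L H N x ≤ Nat.count (fun i => optSeq T r L H N x i = H) N :=
      naiveCount_le_count_optSeq (repStep_monotone hΛ.le hq hw0 hw1 hL.2)
      (repStep_monotone hΛ.le hq hw0 hw1 hH.2) (periodProfit_monotone hΛ.le hq hcp.le hL.2)
      (periodProfit_monotone hΛ.le hq hcp.le hH.2) (id_le_repStep hw0 hw1 hL.1 hL.2)
      (repStep_le_repStep hΛ.le hq hw0 hw1 hLHα hH.2)
      (ordConnected_periodProfit_lt hΛ.le hq hcp.le hLHα hH.2) N x
    rw [← Nat.count_eq_card_filter_range, ← Nat.count_eq_card_filter_range]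
    exact (count_naiveAd_eq_naiveCount hw0 hw1 hLH.ne hL hH x N).trans_le hcount

/-- Proposition 3: under variable capacity there is an optimal (aware)
advertisement sequence that uses at least as many high-level advertisements as
the naive myopic firm. -/
theorem naive_never_more_high_ads_than_aware
    (Λ c p cA m u α w L H R1 q : ℝ) (N : ℕ)
    (hΛ : 0 < Λ) (hc : 0 < c) (hcp : c < p) (hcA : 0 ≤ cA)
    (hm : 0 < m) (hu : 0 ≤ u) (hqdef : q = (u + p) / m) (hq1 : q < 1)
    (hα : 0 < α) (hw0 : 0 ≤ w) (hw1 : w ≤ 1)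
    (hL0 : 0 ≤ L) (hLH : L < H) (hH1 : H ≤ 1)
    (hR10 : 0 ≤ R1) (hR11 : R1 ≤ 1) :
    ∃ Astar : ℕ → ℝ, (∀ i, Astar i = L ∨ Astar i = H) ∧
      (∀ B : ℕ → ℝ, (∀ i, B i = L ∨ B i = H) →
        profit α w Λ q p c cA B R1 N ≤ profit α w Λ q p c cA Astar R1 N) ∧
      ((Finset.range N).filter
          (fun i => naiveAd α Λ q p c cA L H (naiveRep α w Λ q p c cA L H R1 i) = H)).card ≤
        ((Finset.range N).filter (fun i => Astar i = H)).card :=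
  naive_never_more_high_ads_than_aware_general Λ c p cA m u α w L H R1 q N hΛ hc hcp hm hu hqdef hα
    hw0 hw1 hL0 hLH hH1 hR10 hR11
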